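/- Suppose the infinite word x is generated by a standard morphism ψ (i.e. x = ψ^ω(c) for some letter c). Let k ∈ ℕ with 0 ≤ k ≤ |ψ(ab)| − 2 and let v denote the prefix of x of length k. Then the k-th right conjugate ψ_k of ψ satisfies ψ_k(x) = v⁻¹x. -/

import Mathlib

/-- The two-letter alphabet 𝒜 = {a, b}. -/
inductive AB : Type
  | a : AB
  | b : AB
deriving DecidableEq, Repr

/-- Apply a morphism (determined by its images on the letters) to a finite word. -/
def applyM (g : AB → List AB) (w : List AB) : List AB := w.flatMap g

/-- The exchange morphism E : a ↦ b, b ↦ a. -/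
def Em : AB → List AB
  | AB.a => [AB.b]
  | AB.b => [AB.a]

/-- The morphism φ : a ↦ ab, b ↦ a. -/
def phim : AB → List AB
  | AB.a => [AB.a, AB.b]
  | AB.b => [AB.a]

/-- Composition of morphisms: `compM g h` applies `h` first, then `g`. -/
def compM (g h : AB → List AB) : AB → List AB := fun c => applyM g (h c)

/-- Powers of a morphism. -/
def mpow (g : AB → List AB) : ℕ → AB → List AB
  | 0 => fun c => [c]
  | n + 1 => compM g (mpow g n)

/-- A morphism is standard iff it is a composition of E and φ (in any number and order). -/
inductive IsStandard : (AB → List AB) → Prop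
  | id : IsStandard (fun c => [c])
  | compE {ψ : AB → List AB} : IsStandard ψ → IsStandard (compM ψ Em)
  | compPhi {ψ : AB → List AB} : IsStandard ψ → IsStandard (compM ψ phim)

/-- `IsRightConj ψ ξ k` : ξ is the k-th right conjugate of ψ, i.e. there is a word u
of length k with ψ(w)u = uξ(w) for all finite words w. -/
def IsRightConj (ψ ξ : AB → List AB) (k : ℕ) : Prop :=
  ∃ u : List AB, u.length = k ∧ ∀ w : List AB, applyM ψ w ++ u = u ++ applyM ξ w

/-- w^k (power of a finite word under concatenation). -/
def lpow (w : List AB) : ℕ → List AB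
  | 0 => []
  | k + 1 => w ++ lpow w k

/-- Standard sequence associated with a directive sequence (d₁, d₂, …) (here `d`
is indexed so that `d i` is dᵢ for i ≥ 1): `sseq d 0 = s₋₁ = b`, `sseq d (n+1) = sₙ`,
with s₀ = a and sₙ = sₙ₋₁^{dₙ} sₙ₋₂. -/
def sseq (d : ℕ → ℕ) : ℕ → List AB
  | 0 => [AB.b]
  | 1 => [AB.a]
  | n + 2 => lpow (sseq d (n + 1)) (d (n + 1)) ++ sseq d n

/-- Convergent denominators: `qseq d n` = qₙ = |sₙ| (q₀ = 1, q₁ = 1 + d₁,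
qₙ = dₙqₙ₋₁ + qₙ₋₂). -/
def qseq (d : ℕ → ℕ) : ℕ → ℕ
  | 0 => 1
  | 1 => 1 + d 1
  | n + 2 => d (n + 2) * qseq d (n + 1) + qseq d n

/-- `PrefInf u x` : the finite word u is a prefix of the infinite word x. -/
def PrefInf (u : List AB) (x : ℕ → AB) : Prop :=
  ∀ i, i < u.length → u.getD i AB.a = x i

/-- Image of an infinite word under a (non-erasing) morphism, letter by letter. -/
def applyInf (g : AB → List AB) (x : ℕ → AB) : ℕ → AB :=
  fun i => (applyM g ((List.range (i + 1)).map x)).getD i AB.a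

/-- `IsProdInf u x` : the infinite word x is the infinite product u 0 · u 1 · u 2 ⋯,
i.e. every finite partial product is a prefix of x. -/
def IsProdInf (u : ℕ → List AB) (x : ℕ → AB) : Prop :=
  ∀ n, PrefInf (((List.range n).map u).flatten) x

/-- Adjoining singular words: `vword d k` is the adjoining singular word v_{k-1}
(so `vword d 0 = v₋₁`), where vₙ = a·sₙ₊₁^{d_{n+2}−1}sₙ·b⁻¹ for n odd and
vₙ = b·sₙ₊₁^{d_{n+2}−1}sₙ·a⁻¹ for n even. -/
def vword (d : ℕ → ℕ) (k : ℕ) : List AB :=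
  (if k % 2 = 0 then AB.a else AB.b) ::
    (lpow (sseq d (k + 1)) (d (k + 1) - 1) ++ sseq d k).dropLast

/-- Singular words: `wword d k` is the singular word w_{k-2}
(w₋₂ = ε, w₋₁ = a, w₀ = b, and wₙ = a·sₙ·b⁻¹ for n ≥ 1 odd, wₙ = b·sₙ·a⁻¹ for n even). -/
def wword (d : ℕ → ℕ) : ℕ → List AB
  | 0 => []
  | 1 => [AB.a]
  | 2 => [AB.b]
  | k + 3 =>
      (if (k + 1) % 2 = 1 then AB.a else AB.b) :: (sseq d (k + 2)).dropLast

/-- The standard morphism σ associated with a type (i) Sturm number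
α = [0;1+d₁,\overline{d₂,…,dₙ}] : σ(a) = sₙ₋₁, σ(b) = sₙ₋₁^{dₙ−d₁} sₙ₋₂. -/
def sigmaGen (d : ℕ → ℕ) (n : ℕ) : AB → List AB
  | AB.a => sseq d n
  | AB.b => lpow (sseq d n) (d n - d 1) ++ sseq d (n - 1)

/-- The directive sequence of α = [0;2,\overline{r}] : d₁ = 1, dᵢ = r for i ≥ 2. -/
def dseq (r : ℕ) : ℕ → ℕ := fun i => if i ≤ 1 then 1 else r

/-- The directive sequence of 1 − α = [0;1,d₁,\overline{d₂,…,dₙ}] obtained from that of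
α = [0;1+d₁,\overline{d₂,…,dₙ}] : ê₁ = 0 and êᵢ = dᵢ₋₁ for i ≥ 2. -/
def dhat (d : ℕ → ℕ) : ℕ → ℕ := fun i => if i ≤ 1 then 0 else d (i - 1)

/-- `Generates ψ c x` : ψ is prolongable on the letter c and x = ψ^ω(c), i.e. every
ψ^m(c) is a prefix of x. -/
def Generates (ψ : AB → List AB) (c : AB) (x : ℕ → AB) : Prop :=
  (∃ w : List AB, w ≠ [] ∧ ψ c = c :: w) ∧ ∀ m, PrefInf (mpow ψ m c) x

/-- Fibonacci numbers, shifted: `fibw k = F_{k-1}`, so fibw 0 = F₋₁ = 1,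
fibw 1 = F₀ = 1, Fₙ = Fₙ₋₁ + Fₙ₋₂. -/
def fibw : ℕ → ℕ
  | 0 => 1
  | 1 => 1
  | n + 2 => fibw (n + 1) + fibw n

/-- `HasCF γ a` : γ has continued fraction expansion [0; a 1, a 2, a 3, …]. -/
def HasCF (γ : ℝ) (a : ℕ → ℕ) : Prop :=
  ∃ x : ℕ → ℝ, x 0 = γ ∧ (∀ i, 0 < x i ∧ x i < 1) ∧
    ∀ i, 1 / x i = (a (i + 1) : ℝ) + x (i + 1)

/-- γ has a continued fraction expansion of type (i):
γ = [0;1+d₁,\overline{d₂,…,dₙ}] < 1/2 with dₙ ≥ d₁ ≥ 1. -/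
def CFTypeI (γ : ℝ) : Prop :=
  ∃ a : ℕ → ℕ, HasCF γ a ∧ γ < 1 / 2 ∧
    ∃ n : ℕ, 2 ≤ n ∧ ∃ d : ℕ → ℕ,
      (∀ i, 1 ≤ i → 1 ≤ d i) ∧ a 1 = 1 + d 1 ∧ (∀ i, 2 ≤ i → a i = d i) ∧
      (∀ i, 2 ≤ i → d (i + (n - 1)) = d i) ∧ d 1 ≤ d n

/-- γ has a continued fraction expansion of type (ii):
γ = [0;1,d₁,\overline{d₂,…,dₙ}] > 1/2 with dₙ ≥ d₁. -/
def CFTypeII (γ : ℝ) : Prop :=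
  ∃ a : ℕ → ℕ, HasCF γ a ∧ 1 / 2 < γ ∧
    ∃ n : ℕ, 2 ≤ n ∧ ∃ d : ℕ → ℕ,
      (∀ i, 1 ≤ i → 1 ≤ d i) ∧ a 1 = 1 ∧ (∀ i, 2 ≤ i → a i = d (i - 1)) ∧
      (∀ i, 2 ≤ i → d (i + (n - 1)) = d i) ∧ d 1 ≤ d n

/-- A Sturm number: an irrational γ ∈ (0,1) whose continued fraction expansion is of
type (i) or type (ii). -/
def IsSturmNumber (γ : ℝ) : Prop :=
  Irrational γ ∧ 0 < γ ∧ γ < 1 ∧ (CFTypeI γ ∨ CFTypeII γ)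

/-!
Since x is a fixed point of ψ and ψ is non-erasing, ψ maps each prefix w of x to a prefix of x
that is at least as long. Reading the identity ψ(w)u = uξ(w) at position |u| + i, for a prefix w
long enough, gives ξ(x)ᵢ = ψ(w)_{|u|+i} = x_{i+|u|}.
-/

namespace List

theorem getD_of_append_eq_append {α : Type*} {p q u : List α} (h : p ++ u = u ++ q) (d : α)
    {i : ℕ} (hi : u.length + i < p.length) : q.getD i d = p.getD (u.length + i) d := by
  rw [← getD_append p u d _ hi, h, getD_append_right _ _ _ _ (Nat.le_add_right _ _),
    Nat.add_sub_cancel_left]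

theorem map_range_prefix_map_range {α : Type*} (f : ℕ → α) {m n : ℕ} (h : m ≤ n) :
    (range m).map f <+: (range n).map f := by
  rw [prefix_iff_eq_take, length_map, length_range, ← map_take, take_range, Nat.min_eq_left h]

end List

theorem applyM_append (g : AB → List AB) (v w : List AB) :
    applyM g (v ++ w) = applyM g v ++ applyM g w :=
  List.flatMap_append

theorem applyM_cons (g : AB → List AB) (c : AB) (w : List AB) :
    applyM g (c :: w) = g c ++ applyM g w :=
  List.flatMap_cons

theorem applyM_prefix_applyM (g : AB → List AB) {v w : List AB} (h : v <+: w) :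
    applyM g v <+: applyM g w := by
  obtain ⟨t, rfl⟩ := h
  exact ⟨applyM g t, (applyM_append g v t).symm⟩

theorem length_le_length_applyM {g : AB → List AB} (hg : ∀ c, 0 < (g c).length)
    (w : List AB) : w.length ≤ (applyM g w).length := by
  induction w with
  | nil => exact Nat.zero_le _
  | cons c w ih =>
    rw [applyM_cons, List.length_append, List.length_cons]
    have := hg c
    omega

theorem IsStandard.length_pos {ψ : AB → List AB} (hψ : IsStandard ψ) (c : AB) :
    0 < (ψ c).length := by
  induction hψ generalizing c with
  | id => exact Nat.one_pos
  | compE _ ih =>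
    exact lt_of_lt_of_le (by cases c <;> simp [Em]) (length_le_length_applyM ih (Em c))
  | compPhi _ ih =>
    exact lt_of_lt_of_le (by cases c <;> simp [phim]) (length_le_length_applyM ih (phim c))

theorem IsRightConj.length_applyM {ψ ξ : AB → List AB} {k : ℕ} (h : IsRightConj ψ ξ k)
    (w : List AB) : (applyM ξ w).length = (applyM ψ w).length := by
  obtain ⟨u, -, hu⟩ := h
  have := congrArg List.length (hu w)
  simp only [List.length_append] at this
  omega

theorem IsRightConj.length_pos {ψ ξ : AB → List AB} {k : ℕ} (h : IsRightConj ψ ξ k)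
    (hψ : ∀ c, 0 < (ψ c).length) (c : AB) : 0 < (ξ c).length := by
  have hc := h.length_applyM [c]
  simp only [applyM, List.flatMap_singleton] at hc
  exact hc ▸ hψ c

theorem PrefInf.eq_map_range {u : List AB} {x : ℕ → AB} (h : PrefInf u x) :
    u = (List.range u.length).map x := by
  refine List.ext_getElem (by simp) fun i hi _ => ?_
  rw [List.getElem_map, List.getElem_range, ← h i hi, List.getD_eq_getElem]

theorem prefInf_map_range (x : ℕ → AB) (n : ℕ) : PrefInf ((List.range n).map x) x := by
  intro i hi
  rw [List.length_map, List.length_range] at hi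
  simp [hi]

theorem PrefInf.of_prefix {u v : List AB} {x : ℕ → AB} (h : PrefInf v x) (huv : u <+: v) :
    PrefInf u x := by
  rw [List.prefix_iff_eq_take, h.eq_map_range, ← List.map_take, List.take_range] at huv
  rw [huv]
  exact prefInf_map_range x _

theorem applyInf_eq_getD {g : AB → List AB} (hg : ∀ c, 0 < (g c).length) (x : ℕ → AB)
    {i n : ℕ} (hin : i < n) : applyInf g x i = (applyM g ((List.range n).map x)).getD i AB.a := by
  obtain ⟨t, ht⟩ := List.map_range_prefix_map_range x hin
  have hlen := length_le_length_applyM hg ((List.range (i + 1)).map x)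
  rw [List.length_map, List.length_range] at hlen
  rw [applyInf, ← ht, applyM_append, List.getD_append _ _ _ _ hlen]

namespace Generates

variable {ψ : AB → List AB} {l : AB} {x : ℕ → AB}

theorem exists_mpow_eq_cons (hx : Generates ψ l x) (hψ : ∀ c, 0 < (ψ c).length) (m : ℕ) :
    ∃ t, mpow ψ m l = l :: t ∧ m ≤ t.length := by
  obtain ⟨⟨w, hw, hψl⟩, -⟩ := hx
  induction m with
  | zero => exact ⟨[], rfl, le_rfl⟩
  | succ m ih =>
    obtain ⟨t, ht, hm⟩ := ih
    refine ⟨w ++ applyM ψ t, ?_, ?_⟩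
    · change applyM ψ (mpow ψ m l) = _
      rw [ht, applyM_cons, hψl, List.cons_append]
    · have := List.length_pos_iff.mpr hw
      have := length_le_length_applyM hψ t
      rw [List.length_append]
      omega

theorem prefInf_applyM (hx : Generates ψ l x) (hψ : ∀ c, 0 < (ψ c).length) (n : ℕ) :
    PrefInf (applyM ψ ((List.range n).map x)) x := by
  obtain ⟨t, ht, hn⟩ := hx.exists_mpow_eq_cons hψ n
  have hpre : (List.range n).map x <+: mpow ψ n l := by
    rw [(hx.2 n).eq_map_range]
    exact List.map_range_prefix_map_range x (by simp [ht]; omega)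
  exact (hx.2 (n + 1)).of_prefix (applyM_prefix_applyM ψ hpre)

end Generates

theorem statement16_general (ψ : AB → List AB) (hψ : IsStandard ψ)
    (l : AB) (x : ℕ → AB) (hx : Generates ψ l x)
    (k : ℕ)
    (ξ : AB → List AB) (hξ : IsRightConj ψ ξ k) :
    applyInf ξ x = fun i => x (i + k) := by
  have hξ_pos := hξ.length_pos hψ.length_pos
  obtain ⟨u, rfl, hconj⟩ := hξ
  funext i
  set w := (List.range (u.length + i + 1)).map x
  have hlen : u.length + i < (applyM ψ w).length :=
    lt_of_lt_of_le (by simp [w]) (length_le_length_applyM hψ.length_pos w)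
  calc applyInf ξ x i
      = (applyM ξ w).getD i AB.a := applyInf_eq_getD hξ_pos x (by omega)
    _ = (applyM ψ w).getD (u.length + i) AB.a := List.getD_of_append_eq_append (hconj w) _ hlen
    _ = x (i + u.length) := by
      rw [hx.prefInf_applyM hψ.length_pos _ _ hlen, Nat.add_comm]

/-- If the infinite word x is generated by a standard morphism ψ and
0 ≤ k ≤ |ψ(ab)| − 2, then the k-th right conjugate ψ_k of ψ satisfies ψ_k(x) = v⁻¹x,
where v is the prefix of x of length k (i.e. ψ_k(x) deletes the first k letters of x). -/
theorem statement16 (ψ : AB → List AB) (hψ : IsStandard ψ)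
    (l : AB) (x : ℕ → AB) (hx : Generates ψ l x)
    (k : ℕ) (hk : k ≤ (applyM ψ [AB.a, AB.b]).length - 2)
    (ξ : AB → List AB) (hξ : IsRightConj ψ ξ k) :
    applyInf ξ x = fun i => x (i + k) :=
  statement16_general ψ hψ l x hx k ξ hξ
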